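/- Let c₁ ∈ ℝ, c₂ > 0, and let A be the bounded self-adjoint operator on ℓ²(ℤ; ℂ) defined by (Af)(v) = c₁·f(v) + c₂·(f(v-1) + f(v+1)), with δ₀ ∈ ℓ²(ℤ; ℂ) the indicator of the vertex 0. Then for every continuous function f : ℝ → ℂ, ⟨δ₀, f(A)δ₀⟩ = ∫_{c₁-2c₂}^{c₁+2c₂} f(x)·1/(π√(4c₂² - (x - c₁)²)) dx. In other words, the spectral measure of A at the root 0 is the arcsine-type measure with density 𝟙[x ∈ (c₁-2c₂, c₁+2c₂)]·1/(π√(4c₂² - (x - c₁)²)). -/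

import Mathlib

/-!
Multiplication by `2 cos θ` shifts cosine coefficients by `±1`, exactly as `A - c₁` shifts
sequences on `ℤ`. Hence `(Aⁿ δ₀)(v)` is the `v`-th cosine coefficient of `(c₁ + 2c₂ cos θ)ⁿ` on
`[0, π]`, and `⟨δ₀, p(A) δ₀⟩` is the average of `p(c₁ + 2c₂ cos θ)` over `θ ∈ [0, π]` for every
polynomial `p`. Since `‖A - c₁‖ ≤ 2c₂`, the spectrum of `A` lies in `[c₁ - 2c₂, c₁ + 2c₂]`; on
that interval both sides are 1-Lipschitz in `f` for the sup norm, so Weierstrass approximation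
extends the identity to continuous `f`. The substitution `x = c₁ + 2c₂ cos θ` turns the average
into the arcsine integral.
-/

open Real MeasureTheory Set Polynomial
open scoped ENNReal InnerProductSpace

section Reindex

variable {α β E : Type*} [NormedAddCommGroup E] {p : ℝ≥0∞}

theorem Memℓp.comp_equiv (hp : 0 < p.toReal) {f : α → E} (hf : Memℓp f p) (e : β ≃ α) :
    Memℓp (f ∘ e) p :=
  memℓp_gen (e.summable_iff.mpr (hf.summable hp))

noncomputable def lp.compEquiv (hp : 0 < p.toReal) (e : β ≃ α) (f : lp (fun _ : α => E) p) :
    lp (fun _ : β => E) p :=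
  ⟨f ∘ e, (lp.memℓp f).comp_equiv hp e⟩

@[simp]
theorem lp.compEquiv_apply (hp : 0 < p.toReal) (e : β ≃ α) (f : lp (fun _ : α => E) p) (b : β) :
    lp.compEquiv hp e f b = f (e b) :=
  rfl

@[simp]
theorem lp.norm_compEquiv (hp : 0 < p.toReal) (e : β ≃ α) (f : lp (fun _ : α => E) p) :
    ‖lp.compEquiv hp e f‖ = ‖f‖ := by
  rw [lp.norm_eq_tsum_rpow hp, lp.norm_eq_tsum_rpow hp]
  exact congrArg (· ^ (1 / p.toReal)) (e.tsum_eq fun a => ‖f a‖ ^ p.toReal)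

end Reindex

theorem IsSelfAdjoint.spectrum_subset_Icc {𝒜 : Type*} [CStarAlgebra 𝒜] {a : 𝒜}
    (ha : IsSelfAdjoint a) {c r : ℝ} (hr : ‖a - algebraMap ℂ 𝒜 c‖ ≤ r) :
    spectrum ℂ a ⊆ (↑) '' Icc (c - r) (c + r) := by
  nontriviality 𝒜 using spectrum.of_subsingleton
  intro z hz
  have hz_sub : z - c ∈ spectrum ℂ (a - algebraMap ℂ 𝒜 c) := by
    rw [← spectrum.sub_singleton_eq]
    exact sub_mem_sub hz rfl
  have hdist : |z.re - c| ≤ r := by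
    rw [ha.mem_spectrum_eq_re hz] at hz_sub
    simpa [← Complex.ofReal_sub] using (spectrum.norm_le_norm_of_mem hz_sub).trans hr
  exact ⟨z.re, ⟨by linarith [abs_le.mp hdist], by linarith [abs_le.mp hdist]⟩,
    (ha.mem_spectrum_eq_re hz).symm⟩

theorem IsSelfAdjoint.cfc_eval_re {𝒜 : Type*} [CStarAlgebra 𝒜] {a : 𝒜} (ha : IsSelfAdjoint a)
    (p : ℂ[X]) : cfc (fun z : ℂ => p.eval (z.re : ℂ)) a = aeval a p := by
  have := ha.isStarNormal
  rw [← cfc_polynomial p a]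
  exact cfc_congr fun z hz => by rw [← ha.mem_spectrum_eq_re hz]

def SupNormLipschitzOn (s : Set ℝ) (L : (ℝ → ℂ) → ℂ) : Prop :=
  ∀ g h : ℝ → ℂ, Continuous g → Continuous h → ∀ ε : ℝ, 0 ≤ ε →
    (∀ x ∈ s, ‖g x - h x‖ ≤ ε) → ‖L g - L h‖ ≤ ε

theorem exists_complex_polynomial_near_of_continuousOn (a b : ℝ) {f : ℝ → ℂ}
    (hf : ContinuousOn f (Icc a b)) {ε : ℝ} (hε : 0 < ε) :
    ∃ p : ℂ[X], ∀ x ∈ Icc a b, ‖p.eval (x : ℂ) - f x‖ < ε := by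
  obtain ⟨p, hp⟩ := exists_polynomial_near_of_continuousOn a b (fun x => (f x).re)
    (Complex.continuous_re.comp_continuousOn hf) (ε / 2) (half_pos hε)
  obtain ⟨q, hq⟩ := exists_polynomial_near_of_continuousOn a b (fun x => (f x).im)
    (Complex.continuous_im.comp_continuousOn hf) (ε / 2) (half_pos hε)
  refine ⟨p.map Complex.ofRealHom + C Complex.I * q.map Complex.ofRealHom, fun x hx => ?_⟩
  have hsplit :
      (p.map Complex.ofRealHom + C Complex.I * q.map Complex.ofRealHom).eval (x : ℂ) - f x =
        ((p.eval x - (f x).re : ℝ) : ℂ) + ((q.eval x - (f x).im : ℝ) : ℂ) * Complex.I := by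
    conv_lhs => rw [← Complex.re_add_im (f x)]
    simp only [eval_add, eval_mul, eval_C, eval_map, ← Complex.ofRealHom_eq_coe, eval₂_hom]
    simp only [Complex.ofRealHom_eq_coe]
    push_cast
    ring
  calc _ ≤ |p.eval x - (f x).re| + |q.eval x - (f x).im| := by
        rw [hsplit, ← Real.norm_eq_abs, ← Real.norm_eq_abs, ← Complex.norm_real,
          ← Complex.norm_real, ← mul_one ‖((q.eval x - (f x).im : ℝ) : ℂ)‖, ← Complex.norm_I,
          ← norm_mul]
        exact norm_add_le _ _
    _ < ε / 2 + ε / 2 := add_lt_add (hp x hx) (hq x hx)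
    _ = ε := add_halves ε

theorem SupNormLipschitzOn.eq_of_forall_polynomial_eq {a b : ℝ} {L₁ L₂ : (ℝ → ℂ) → ℂ}
    (hL₁ : SupNormLipschitzOn (Icc a b) L₁) (hL₂ : SupNormLipschitzOn (Icc a b) L₂)
    (hpoly : ∀ p : ℂ[X], L₁ (fun x => p.eval (x : ℂ)) = L₂ (fun x => p.eval (x : ℂ)))
    {f : ℝ → ℂ} (hf : Continuous f) : L₁ f = L₂ f := by
  refine eq_of_forall_dist_le fun ε hε => ?_
  obtain ⟨p, hp⟩ := exists_complex_polynomial_near_of_continuousOn a b hf.continuousOn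
    (half_pos hε)
  have hnear : ∀ x ∈ Icc a b, ‖f x - p.eval (x : ℂ)‖ ≤ ε / 2 :=
    fun x hx => by rw [norm_sub_rev]; exact (hp x hx).le
  have hcont : Continuous fun x : ℝ => p.eval (x : ℂ) := by fun_prop
  calc dist (L₁ f) (L₂ f)
      ≤ ‖L₁ f - L₁ (fun x => p.eval (x : ℂ))‖ + ‖L₂ (fun x => p.eval (x : ℂ)) - L₂ f‖ := by
        rw [dist_eq_norm, ← hpoly]; exact norm_sub_le_norm_sub_add_norm_sub _ _ _
    _ ≤ ε / 2 + ε / 2 := by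
        gcongr
        · exact hL₁ _ _ hf hcont _ (half_pos hε).le hnear
        · rw [norm_sub_rev]; exact hL₂ _ _ hf hcont _ (half_pos hε).le hnear
    _ = ε := add_halves ε

theorem supNormLipschitzOn_inner_cfc {H : Type*} [NormedAddCommGroup H] [InnerProductSpace ℂ H]
    [CompleteSpace H] {A : H →L[ℂ] H} (hA : IsSelfAdjoint A) {s : Set ℝ}
    (hs : spectrum ℂ A ⊆ (↑) '' s) {x : H} (hx : ‖x‖ ≤ 1) :
    SupNormLipschitzOn s fun g => ⟪x, cfc (fun z : ℂ => g z.re) A x⟫_ℂ := by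
  have := hA.isStarNormal
  intro g h hg hh ε hε hgh
  rw [← inner_sub_right, ← sub_apply, ← cfc_sub _ _ A]
  calc _ ≤ ‖x‖ * (‖cfc (fun z : ℂ => g z.re - h z.re) A‖ * ‖x‖) :=
        (norm_inner_le_norm _ _).trans (by gcongr; exact ContinuousLinearMap.le_opNorm _ _)
    _ ≤ 1 * (ε * 1) := by
        gcongr
        refine norm_cfc_le hε fun z hz => ?_
        obtain ⟨t, ht, rfl⟩ := hs hz
        simpa using hgh t ht
    _ = ε := by ring

theorem supNormLipschitzOn_interval_average {a b : ℝ} (hab : a < b) {φ : ℝ → ℝ}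
    (hφ : Continuous φ) {s : Set ℝ} (hφs : MapsTo φ (Icc a b) s) :
    SupNormLipschitzOn s fun g => ⨍ θ in a..b, g (φ θ) := by
  intro g h hg hh ε hε hgh
  have hsub : (⨍ θ in a..b, g (φ θ)) - ⨍ θ in a..b, h (φ θ)
      = (b - a)⁻¹ • ∫ θ in a..b, (g (φ θ) - h (φ θ)) := by
    rw [interval_average_eq, interval_average_eq, ← smul_sub, intervalIntegral.integral_sub]
    exacts [(hg.comp hφ).intervalIntegrable _ _, (hh.comp hφ).intervalIntegrable _ _]
  rw [hsub, norm_smul]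
  calc _ ≤ ‖(b - a)⁻¹‖ * (ε * |b - a|) := by
        gcongr
        refine intervalIntegral.norm_integral_le_of_norm_le_const fun θ hθ => hgh _ (hφs ?_)
        rw [uIoc_of_le hab.le] at hθ
        exact Ioc_subset_Icc_self hθ
    _ = ε := by
        rw [norm_inv, Real.norm_eq_abs]
        field_simp [(abs_pos.mpr (sub_ne_zero.mpr hab.ne')).ne']

noncomputable def cosineCoeff (g : ℝ → ℝ) (v : ℤ) : ℝ := ⨍ θ in 0..π, g θ * cos (v * θ)

theorem cosineCoeff_one (v : ℤ) : cosineCoeff (fun _ => 1) v = if v = 0 then 1 else 0 := by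
  rw [cosineCoeff, interval_average_eq]
  split_ifs with hv
  · simp [hv, pi_pos.ne']
  · have hv' : (v : ℝ) ≠ 0 := by exact_mod_cast hv
    simp [intervalIntegral.integral_comp_mul_left (fun θ => cos θ) hv', sin_int_mul_pi]

theorem cosineCoeff_jacobi_mul (c₁ c₂ : ℝ) {g : ℝ → ℝ} (hg : Continuous g) (v : ℤ) :
    cosineCoeff (fun θ => (c₁ + 2 * c₂ * cos θ) * g θ) v
      = c₁ * cosineCoeff g v + c₂ * (cosineCoeff g (v - 1) + cosineCoeff g (v + 1)) := by
  have hint : ∀ w : ℤ, IntervalIntegrable (fun θ => g θ * cos (w * θ)) volume 0 π :=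
    fun w => (hg.mul (by fun_prop)).intervalIntegrable _ _
  have hpoint : ∀ θ, (c₁ + 2 * c₂ * cos θ) * g θ * cos (v * θ)
      = c₁ * (g θ * cos (v * θ))
        + c₂ * (g θ * cos (↑(v - 1) * θ) + g θ * cos (↑(v + 1) * θ)) := by
    intro θ
    push_cast
    simp only [sub_mul, add_mul, one_mul, cos_sub, cos_add]
    ring
  simp only [cosineCoeff, interval_average_eq, smul_eq_mul, hpoint]
  rw [intervalIntegral.integral_add ((hint v).const_mul _) (((hint _).add (hint _)).const_mul _),
    intervalIntegral.integral_const_mul, intervalIntegral.integral_const_mul,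
    intervalIntegral.integral_add (hint _) (hint _)]
  ring

def IsJacobiOperator (c₁ c₂ : ℝ) (A : lp (fun _ : ℤ => ℂ) 2 →L[ℂ] lp (fun _ : ℤ => ℂ) 2) :
    Prop :=
  ∀ (f : lp (fun _ : ℤ => ℂ) 2) (v : ℤ), A f v = c₁ * f v + c₂ * (f (v - 1) + f (v + 1))

namespace IsJacobiOperator

variable {c₁ c₂ : ℝ} {A : lp (fun _ : ℤ => ℂ) 2 →L[ℂ] lp (fun _ : ℤ => ℂ) 2}

theorem norm_sub_algebraMap_le (hA : IsJacobiOperator c₁ c₂ A) (hc₂ : 0 ≤ c₂) :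
    ‖A - algebraMap ℂ _ c₁‖ ≤ 2 * c₂ := by
  have h2 : (0 : ℝ) < (2 : ℝ≥0∞).toReal := by norm_num
  let shift (k : ℤ) := lp.compEquiv (E := ℂ) h2 (Equiv.addRight k)
  have hshift : ∀ f, (A - algebraMap ℂ _ c₁) f = (c₂ : ℂ) • (shift (-1) f + shift 1 f) := by
    intro f
    ext v
    simp only [Algebra.algebraMap_eq_smul_one, sub_apply, smul_apply, one_apply_eq_self,
      lp.coeFn_sub, lp.coeFn_smul, lp.coeFn_add, Pi.sub_apply, Pi.add_apply, Pi.smul_apply,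
      smul_eq_mul, hA f, shift, lp.compEquiv_apply, Equiv.coe_addRight, ← sub_eq_add_neg]
    ring
  refine ContinuousLinearMap.opNorm_le_bound _ (by positivity) fun f => ?_
  calc ‖(A - algebraMap ℂ _ c₁) f‖ = c₂ * ‖shift (-1) f + shift 1 f‖ := by
        rw [hshift, norm_smul, Complex.norm_real, norm_of_nonneg hc₂]
    _ ≤ c₂ * (‖shift (-1) f‖ + ‖shift 1 f‖) := by gcongr; exact norm_add_le _ _
    _ = 2 * c₂ * ‖f‖ := by simp only [shift, lp.norm_compEquiv]; ring

theorem pow_apply_single (hA : IsJacobiOperator c₁ c₂ A) (n : ℕ) (v : ℤ) :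
    (A ^ n) (lp.single 2 0 1) v = cosineCoeff (fun θ => (c₁ + 2 * c₂ * cos θ) ^ n) v := by
  induction n generalizing v with
  | zero => simp [cosineCoeff_one, lp.single_apply, Pi.single_apply, apply_ite]
  | succ n ih =>
    rw [pow_succ', mul_apply_eq_comp, hA, ih, ih, ih]
    simp only [pow_succ']
    rw [cosineCoeff_jacobi_mul c₁ c₂ (by fun_prop)]
    push_cast
    ring

theorem inner_single_aeval_single (hA : IsJacobiOperator c₁ c₂ A) (p : ℂ[X]) :
    ⟪lp.single 2 0 1, aeval A p (lp.single 2 0 1)⟫_ℂ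
      = ⨍ θ in 0..π, p.eval ((c₁ + 2 * c₂ * cos θ : ℝ) : ℂ) := by
  induction p using Polynomial.induction_on' with
  | add p q hp hq =>
    rw [map_add, add_apply, inner_add_right, hp, hq, interval_average_eq, interval_average_eq,
      interval_average_eq, ← smul_add, ← intervalIntegral.integral_add]
    · simp only [eval_add]
    all_goals exact Continuous.intervalIntegrable (by fun_prop) _ _
  | monomial n a =>
    simp only [aeval_monomial, Algebra.algebraMap_eq_smul_one, smul_mul_assoc, one_mul, smul_apply,
      inner_smul_right, lp.inner_single_left, hA.pow_apply_single, cosineCoeff,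
      eval_monomial, Int.cast_zero, zero_mul, cos_zero, mul_one, interval_average_eq,
      RCLike.inner_apply, map_one, smul_eq_mul, Complex.real_smul, Complex.ofReal_mul,
      intervalIntegral.integral_const_mul, ← intervalIntegral.integral_ofReal]
    push_cast
    ring

end IsJacobiOperator

theorem image_cos_Ioo : cos '' Ioo 0 π = Ioo (-1) 1 := by
  ext y
  constructor
  · rintro ⟨θ, hθ, rfl⟩
    have hθ' := Ioo_subset_Icc_self hθ
    refine ⟨?_, ?_⟩
    · simpa using strictAntiOn_cos hθ' (right_mem_Icc.mpr pi_pos.le) hθ.2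
    · simpa using strictAntiOn_cos (left_mem_Icc.mpr pi_pos.le) hθ' hθ.1
  · rintro ⟨hy₁, hy₂⟩
    exact ⟨arccos y, ⟨arccos_pos.mpr hy₂, arccos_lt_pi.mpr hy₁⟩, cos_arccos hy₁.le hy₂.le⟩

theorem integral_arcsine_density (c : ℝ) {r : ℝ} (hr : 0 < r) (g : ℝ → ℂ) :
    ∫ x in (c - r)..(c + r), g x * ((1 / (π * √(r ^ 2 - (x - c) ^ 2)) : ℝ) : ℂ)
      = ⨍ θ in 0..π, g (c + r * cos θ) := by
  set φ : ℝ → ℝ := fun θ => c + r * cos θ with hφ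
  have himage : φ '' Ioo 0 π = Ioo (c - r) (c + r) := by
    have : φ = (c + ·) ∘ (r * ·) ∘ cos := rfl
    rw [this, image_comp, image_comp, image_cos_Ioo, image_mul_left_Ioo hr, image_const_add_Ioo]
    congr 1 <;> ring
  have hderiv : ∀ θ ∈ Ioo 0 π, HasDerivWithinAt φ (-(r * sin θ)) (Ioo 0 π) θ := fun θ _ =>
    ((((hasDerivAt_cos θ).const_mul r).const_add c).hasDerivWithinAt).congr_deriv (by ring)
  have hinj : InjOn φ (Ioo 0 π) := fun x hx y hy hxy =>
    injOn_cos (Ioo_subset_Icc_self hx) (Ioo_subset_Icc_self hy) (by simpa [hφ, hr.ne'] using hxy)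
  have hchange := integral_image_eq_integral_abs_deriv_smul measurableSet_Ioo hderiv hinj
    (fun x => g x * ((1 / (π * √(r ^ 2 - (x - c) ^ 2)) : ℝ) : ℂ))
  rw [himage] at hchange
  rw [intervalIntegral.integral_of_le (by linarith), integral_Ioc_eq_integral_Ioo, hchange,
    interval_average_eq, intervalIntegral.integral_of_le pi_pos.le, integral_Ioc_eq_integral_Ioo,
    ← integral_smul]
  refine setIntegral_congr_fun measurableSet_Ioo fun θ hθ => ?_
  have hsin : 0 < sin θ := sin_pos_of_pos_of_lt_pi hθ.1 hθ.2
  have hsqrt : √(r ^ 2 - (φ θ - c) ^ 2) = r * sin θ := by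
    rw [← sqrt_sq (by positivity : 0 ≤ r * sin θ)]
    congr 1
    simp only [hφ]
    nlinarith [sin_sq_add_cos_sq θ]
  simp only [hsqrt, abs_neg, abs_of_pos (mul_pos hr hsin), Complex.real_smul, sub_zero]
  have hne : (r : ℂ) * Complex.sin θ ≠ 0 := by exact_mod_cast (mul_pos hr hsin).ne'
  push_cast
  field_simp
  exact mul_div_cancel_left₀ _ hne

/-- For the self-adjoint Jacobi operator `(Af)(v) = c₁f(v) + c₂(f(v-1) + f(v+1))` on
`ℓ²(ℤ; ℂ)` and the indicator `δ₀` of the vertex `0`, the spectral measure at the root `0`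
is the arcsine-type measure: `⟨δ₀, f(A)δ₀⟩ = ∫_{c₁-2c₂}^{c₁+2c₂} f(x)/(π√(4c₂² - (x-c₁)²)) dx`
for every continuous `f`, where `f(A)` is given by the continuous functional calculus
(the spectrum of the self-adjoint `A` is real, so only values of `f` on `ℝ` matter). -/
theorem spectral_measure_at_root_is_arcsine
    (c₁ c₂ : ℝ) (hc₂ : 0 < c₂)
    (A : lp (fun _ : ℤ => ℂ) 2 →L[ℂ] lp (fun _ : ℤ => ℂ) 2)
    (hA : ∀ (f : lp (fun _ : ℤ => ℂ) 2) (v : ℤ),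
      A f v = (c₁ : ℂ) * f v + (c₂ : ℂ) * (f (v - 1) + f (v + 1)))
    (hsa : IsSelfAdjoint A)
    (δ₀ : lp (fun _ : ℤ => ℂ) 2) (hδ₀ : ∀ v : ℤ, δ₀ v = if v = 0 then 1 else 0)
    (f : ℝ → ℂ) (hf : Continuous f) :
    (inner ℂ δ₀ (cfc (fun z : ℂ => f z.re) A δ₀) : ℂ)
      = ∫ x in (c₁ - 2 * c₂)..(c₁ + 2 * c₂),
          f x * ((1 / (π * Real.sqrt (4 * c₂ ^ 2 - (x - c₁) ^ 2)) : ℝ) : ℂ) := by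
  have hJ : IsJacobiOperator c₁ c₂ A := hA
  obtain rfl : δ₀ = lp.single 2 0 1 := by
    ext v
    simp [hδ₀, lp.single_apply, Pi.single_apply]
  have hspec := hsa.spectrum_subset_Icc (hJ.norm_sub_algebraMap_le hc₂.le)
  have hcos :
      MapsTo (fun θ => c₁ + 2 * c₂ * cos θ) (Icc 0 π) (Icc (c₁ - 2 * c₂) (c₁ + 2 * c₂)) :=
    fun θ _ => by
      constructor <;> dsimp only <;> nlinarith [neg_one_le_cos θ, cos_le_one θ]
  have harcsine := integral_arcsine_density c₁ (mul_pos two_pos hc₂) f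
  rw [mul_pow, show (2 : ℝ) ^ 2 = 4 by norm_num] at harcsine
  rw [harcsine]
  refine (supNormLipschitzOn_inner_cfc hsa hspec ?_).eq_of_forall_polynomial_eq
    (supNormLipschitzOn_interval_average pi_pos (by fun_prop) hcos) (fun p => ?_) hf
  · rw [lp.norm_single (by norm_num), norm_one]
  · rw [hsa.cfc_eval_re, hJ.inner_single_aeval_single]
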